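/- arXiv:1708.08831 — 4 statements merged into one kernel-verified Lean document; each statement's English description precedes it below -/
import Mathlib

section
/- For the classical secretary problem with T candidates arriving in uniformly random order, the strategy that rejects the first k candidates and then accepts the first candidate better than all previous ones wins (selects the overall best candidate) with probability (k/T) * \sum_{m=k+1}^{T} 1/(m-1). -/
open Finset
open scoped Classical

/-!
Condition on the position `m ≥ k` of the best candidate. The cutoff strategy then wins exactly
when no candidate in positions `k, …, m - 1` is a record, i.e. when the best of the first `m`
candidates sits among the first `k`. Conditioned on the position of the best candidate, the
position of the best of the first `m` is uniform on those `m` positions (swapping two of them is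
a bijection), so this happens with probability `k / m`; the best candidate is at `m` with
probability `1 / T`. Summing over `m` gives `(k / T) ∑_{k ≤ m < T} 1 / m`.
-/

namespace Secretary

open Equiv

section DecidableEq

variable {α : Type*} [Fintype α] [DecidableEq α]

theorem card_mul_card_perm_apply_eq (a b : α) :
    Fintype.card α * #{σ : Perm α | σ a = b} = (Fintype.card α).factorial := by
  have fiber_eq (c : α) : #{σ : Perm α | σ a = c} = #{σ : Perm α | σ a = b} :=
    card_equiv (Equiv.mulLeft (swap c b)) fun σ => by simp [swap_apply_eq_iff]
  calc Fintype.card α * #{σ : Perm α | σ a = b}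
      = ∑ c : α, #{σ : Perm α | σ a = c} := by simp [fiber_eq]
    _ = #(univ : Finset (Perm α)) := (card_eq_sum_card_fiberwise fun σ _ => mem_univ (σ a)).symm
    _ = (Fintype.card α).factorial := by rw [card_univ, Fintype.card_perm]

theorem pairwiseDisjoint_filter_apply_eq (S : Set α) (b : α) (Q : α → Perm α → Prop)
    [∀ m σ, Decidable (Q m σ)] :
    S.PairwiseDisjoint fun m => ({σ : Perm α | σ m = b ∧ Q m σ} : Finset (Perm α)) := by
  intro m _ m' _ hmm'
  refine disjoint_left.mpr fun σ hσ hσ' => hmm' (σ.injective ?_)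
  simp only [mem_filter, mem_univ, true_and] at hσ hσ'
  rw [hσ.1, hσ'.1]

end DecidableEq

section LinearOrder

variable {α : Type*} [LinearOrder α]

theorem eq_of_isArgmax {σ : Perm α} {s : Finset α} {p q : α} (hp : p ∈ s) (hq : q ∈ s)
    (hpmax : ∀ j ∈ s, σ j ≤ σ p) (hqmax : ∀ j ∈ s, σ j ≤ σ q) : p = q :=
  σ.injective ((hqmax p hp).antisymm (hpmax q hq))

theorem forall_ne_apply_lt_iff {σ : Perm α} {m t : α} (ht : IsTop t) :
    (∀ j, j ≠ m → σ j < σ m) ↔ σ m = t := by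
  constructor
  · intro h
    by_contra hmt
    have hne : σ.symm t ≠ m := fun h' => hmt (h' ▸ σ.apply_symm_apply t)
    exact (h _ hne).not_ge (by simpa using ht (σ m))
  · rintro h j hj
    rw [h]
    exact (ht (σ j)).lt_of_ne fun hjt => hj (σ.injective (hjt.trans h.symm))

theorem forall_exists_lt_iff_exists_argmax_lt [LocallyFiniteOrderBot α] {σ : Perm α}
    {c m : α} (hc : (Iio c).Nonempty) (hcm : c ≤ m) :
    (∀ j, c ≤ j → j < m → ∃ i, i < j ∧ σ j < σ i) ↔
      ∃ p ∈ Iio c, ∀ j ∈ Iio m, σ j ≤ σ p := by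
  constructor
  · intro h
    obtain ⟨p, hpm, hmax⟩ := (Iio m).exists_max_image σ (hc.mono (Iio_subset_Iio hcm))
    refine ⟨p, mem_Iio.mpr (lt_of_not_ge fun hcp => ?_), hmax⟩
    obtain ⟨i, hip, hpi⟩ := h p hcp (mem_Iio.mp hpm)
    exact hpi.not_ge (hmax i (mem_Iio.mpr (hip.trans (mem_Iio.mp hpm))))
  · rintro ⟨p, hpc, hmax⟩ j hcj hjm
    have hpj : p < j := (mem_Iio.mp hpc).trans_le hcj
    exact ⟨p, hpj, (hmax j (mem_Iio.mpr hjm)).lt_of_ne (σ.injective.ne hpj.ne')⟩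

variable [Fintype α]

def permsWithArgmax (a b : α) (s : Finset α) (p : α) : Finset (Perm α) :=
  {σ | σ a = b ∧ ∀ j ∈ s, σ j ≤ σ p}

theorem card_permsWithArgmax_le {a b : α} {s : Finset α} {p q : α} (ha : a ∉ s)
    (hp : p ∈ s) (hq : q ∈ s) :
    #(permsWithArgmax a b s p) ≤ #(permsWithArgmax a b s q) := by
  refine card_le_card_of_injOn (· * swap p q) (fun σ hσ => ?_) (mul_left_injective _).injOn
  simp only [permsWithArgmax, coe_filter, mem_univ, true_and] at hσ ⊢
  refine ⟨?_, fun j hj => ?_⟩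
  · rw [Perm.mul_apply, swap_apply_of_ne_of_ne (ne_of_mem_of_not_mem hp ha).symm
      (ne_of_mem_of_not_mem hq ha).symm, hσ.1]
  · rw [Perm.mul_apply, Perm.mul_apply, swap_apply_right]
    refine hσ.2 _ ?_
    rcases eq_or_ne j p with rfl | hjp
    · rwa [swap_apply_left]
    rcases eq_or_ne j q with rfl | hjq
    · rwa [swap_apply_right]
    · rwa [swap_apply_of_ne_of_ne hjp hjq]

theorem card_permsWithArgmax_eq {a b : α} {s : Finset α} {p q : α} (ha : a ∉ s)
    (hp : p ∈ s) (hq : q ∈ s) :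
    #(permsWithArgmax a b s p) = #(permsWithArgmax a b s q) :=
  (card_permsWithArgmax_le ha hp hq).antisymm (card_permsWithArgmax_le ha hq hp)

theorem card_filter_exists_argmax (a b : α) {s P : Finset α} (hPs : P ⊆ s) :
    #{σ : Perm α | σ a = b ∧ ∃ p ∈ P, ∀ j ∈ s, σ j ≤ σ p} =
      ∑ p ∈ P, #(permsWithArgmax a b s p) := by
  rw [← card_biUnion]
  · congr 1
    ext σ
    simp only [permsWithArgmax, mem_filter, mem_univ, true_and, mem_biUnion]
    exact ⟨fun ⟨hσa, p, hp, hmax⟩ => ⟨p, hp, hσa, hmax⟩,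
      fun ⟨p, hp, hσa, hmax⟩ => ⟨hσa, p, hp, hmax⟩⟩
  · intro p hp q hq hpq
    refine disjoint_left.mpr fun σ hσp hσq => hpq ?_
    simp only [permsWithArgmax, mem_filter, mem_univ, true_and] at hσp hσq
    exact eq_of_isArgmax (hPs hp) (hPs hq) hσp.2 hσq.2

theorem filter_exists_argmax_self (a b : α) {s : Finset α} (hs : s.Nonempty) :
    ({σ : Perm α | σ a = b ∧ ∃ p ∈ s, ∀ j ∈ s, σ j ≤ σ p} : Finset (Perm α)) =
      ({σ : Perm α | σ a = b} : Finset (Perm α)) := by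
  ext σ
  simp only [mem_filter, mem_univ, true_and, and_iff_left_iff_imp]
  exact fun _ => s.exists_max_image σ hs

theorem card_mul_card_filter_exists_argmax {a b : α} {s P : Finset α} (ha : a ∉ s)
    (hPs : P ⊆ s) :
    #s * #{σ : Perm α | σ a = b ∧ ∃ p ∈ P, ∀ j ∈ s, σ j ≤ σ p} =
      #P * #{σ : Perm α | σ a = b} := by
  rcases s.eq_empty_or_nonempty with rfl | ⟨p₀, hp₀⟩
  · simp [subset_empty.mp hPs]
  have hconst : ∀ p ∈ s, #(permsWithArgmax a b s p) = #(permsWithArgmax a b s p₀) :=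
    fun p hp => card_permsWithArgmax_eq ha hp hp₀
  rw [← filter_exists_argmax_self a b ⟨p₀, hp₀⟩, card_filter_exists_argmax a b hPs,
    card_filter_exists_argmax a b subset_rfl, sum_congr rfl hconst,
    sum_congr rfl fun p hp => hconst p (hPs hp)]
  simp only [sum_const, smul_eq_mul]
  ring

end LinearOrder

theorem filter_cutoff_win_eq_biUnion {T k : ℕ} (hk : 1 ≤ k) (hkT : k < T) {t : Fin T}
    (ht : IsTop t) :
    (univ.filter fun σ : Perm (Fin T) =>
        ∃ m : Fin T, k ≤ (m : ℕ) ∧ (∀ j : Fin T, j ≠ m → σ j < σ m) ∧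
          (∀ j : Fin T, k ≤ (j : ℕ) → j < m → ∃ i : Fin T, i < j ∧ σ j < σ i)) =
      (Ici ⟨k, hkT⟩).biUnion fun m =>
        {σ | σ m = t ∧ ∃ p ∈ Iio ⟨k, hkT⟩, ∀ j ∈ Iio m, σ j ≤ σ p} := by
  have hc : (Iio (⟨k, hkT⟩ : Fin T)).Nonempty :=
    ⟨⟨0, by omega⟩, mem_Iio.mpr (Fin.mk_lt_mk.mpr hk)⟩
  ext σ
  simp only [mem_filter, mem_univ, true_and, mem_biUnion, mem_Ici]
  exact exists_congr fun m => and_congr_right fun hkm =>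
    and_congr (forall_ne_apply_lt_iff ht) (forall_exists_lt_iff_exists_argmax_lt hc hkm)

theorem cast_card_filter_apply_eq_exists_argmax_Iio {T : ℕ} {c m : Fin T} (hc : 0 < (c : ℕ))
    (hcm : c ≤ m) (t : Fin T) :
    (#{σ : Perm (Fin T) | σ m = t ∧ ∃ p ∈ Iio c, ∀ j ∈ Iio m, σ j ≤ σ p} : ℝ) =
      T.factorial * (((c : ℕ) / T) * (1 / (m : ℕ))) := by
  have h := card_mul_card_filter_exists_argmax (b := t) (notMem_Iio_self (b := m))
    (Iio_subset_Iio hcm)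
  rw [Fin.card_Iio, Fin.card_Iio] at h
  have h' := card_mul_card_perm_apply_eq m t
  rw [Fintype.card_fin] at h'
  have hnat : (m : ℕ) * T *
      #{σ : Perm (Fin T) | σ m = t ∧ ∃ p ∈ Iio c, ∀ j ∈ Iio m, σ j ≤ σ p} = c * T.factorial :=
    calc (m : ℕ) * T * _ = m * _ * T := mul_right_comm _ _ _
      -- `convert` reconciles the decidability instances of a general linear order with `Fin T`'s
      _ = c * #{σ : Perm (Fin T) | σ m = t} * T := by convert congrArg (· * T) h
      _ = c * T.factorial := by rw [mul_assoc, mul_comm _ T, h']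
  have hm : 0 < (m : ℕ) := hc.trans_le hcm
  have hT : 0 < T := hm.trans m.isLt
  rw [← Nat.cast_inj (R := ℝ)] at hnat
  push_cast at hnat
  field_simp
  linarith

theorem sum_Ici_one_div_eq_sum_Icc {T k : ℕ} (hkT : k < T) :
    ∑ m ∈ Ici (⟨k, hkT⟩ : Fin T), 1 / ((m : ℕ) : ℝ) =
      ∑ m ∈ Icc (k + 1) T, 1 / ((m : ℝ) - 1) := by
  rw [← Ico_add_one_right_eq_Icc, ← sum_Ico_add' (fun m : ℕ => 1 / ((m : ℝ) - 1)),
    ← Fin.map_valEmbedding_Ici (a := ⟨k, hkT⟩), sum_map]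
  simp

end Secretary

open Secretary

/-- Classical secretary problem: with `T` candidates in uniformly random order
(modeled as a uniformly random permutation `σ` giving the ranks), the cutoff-`k`
strategy (reject the first `k`, then accept the first candidate better than all
previous ones) wins with probability `(k/T) * ∑_{m=k+1}^{T} 1/(m-1)`. -/
theorem secretary_cutoff_win_prob (T k : ℕ) (hk : 1 ≤ k) (hkT : k < T) :
    ((Finset.univ.filter (fun σ : Equiv.Perm (Fin T) =>
        ∃ m : Fin T, k ≤ (m : ℕ) ∧ (∀ j : Fin T, j ≠ m → σ j < σ m) ∧
          (∀ j : Fin T, k ≤ (j : ℕ) → j < m → ∃ i : Fin T, i < j ∧ σ j < σ i))).card : ℝ)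
      / (Nat.factorial T : ℝ) =
    ((k : ℝ) / T) * ∑ m ∈ Finset.Icc (k + 1) T, 1 / ((m : ℝ) - 1) := by
  obtain ⟨t, ht⟩ : ∃ t : Fin T, IsTop t :=
    ⟨⟨T - 1, by omega⟩, fun x => Fin.le_def.mpr (Nat.le_sub_one_of_lt x.isLt)⟩
  rw [filter_cutoff_win_eq_biUnion hk hkT ht,
    card_biUnion (pairwiseDisjoint_filter_apply_eq _ _ _), Nat.cast_sum,
    sum_congr rfl fun m hm =>
      cast_card_filter_apply_eq_exists_argmax_Iio (c := ⟨k, hkT⟩) hk (mem_Ici.mp hm) t,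
    ← mul_sum, ← mul_sum, sum_Ici_one_div_eq_sum_Icc hkT,
    mul_div_cancel_left₀ _ (by positivity)]
end

section
/- For each fixed T ≥ 1 and 1 ≤ k < T, the integral identity \int_0^1 k x^{k-1} \sum_{m=k+1}^T x^{m-k-1} ((1 - x^{T-m+1})/(T-m+1)) dx = (k/T) \sum_{m=k+1}^T 1/(m-1) holds. -/
open Finset

/-!
Since $k x^{k-1} x^{m-k-1} = k x^{m-2}$, the $m$-th summand integrates to
$\frac{k}{n}\int_0^1 x^{m-2}(1 - x^{n})\,dx$ with $n = T - m + 1$, and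
$\int_0^1 x^a (1 - x^b)\,dx = \frac{b}{(a+1)(a+b+1)}$ turns this into
$\frac{k}{n} \cdot \frac{n}{(m-1)T} = \frac{k}{T(m-1)}$.
-/

theorem integral_pow_mul_one_sub_pow (a b : ℕ) :
    ∫ x in (0:ℝ)..1, x ^ a * (1 - x ^ b) = b / ((a + 1) * (a + b + 1)) := by
  simp_rw [mul_sub, mul_one, ← pow_add]
  rw [intervalIntegral.integral_sub (intervalIntegral.intervalIntegrable_pow _)
    (intervalIntegral.intervalIntegrable_pow _), integral_pow, integral_pow]
  push_cast
  field_simp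
  ring

theorem integral_secretary_summand {T k m : ℕ} (hk : 1 ≤ k) (hm : m ∈ Icc (k + 1) T) :
    ∫ x in (0:ℝ)..1, (k : ℝ) * x ^ (k - 1) *
        (x ^ (m - k - 1) * ((1 - x ^ (T - m + 1)) / ((T - m + 1 : ℕ) : ℝ))) =
      (k / T) * (1 / ((m : ℝ) - 1)) := by
  rw [mem_Icc] at hm
  have hpow (x : ℝ) : x ^ (k - 1) * x ^ (m - k - 1) = x ^ (m - 2) := by
    rw [← pow_add]; congr 1; omega
  have hm1 : ((m - 2 : ℕ) : ℝ) + 1 = m - 1 := by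
    rw [Nat.cast_sub (by omega)]; ring
  have hT : ((m - 2 : ℕ) : ℝ) + ((T - m + 1 : ℕ) : ℝ) + 1 = T := by
    rw [← Nat.cast_add, ← Nat.cast_add_one]; congr 1; omega
  have hn : ((T - m + 1 : ℕ) : ℝ) ≠ 0 := by positivity
  have hm1_ne : (m : ℝ) - 1 ≠ 0 := by
    rw [← hm1]; positivity
  calc _ = ∫ x in (0:ℝ)..1, (k / ((T - m + 1 : ℕ) : ℝ)) *
          (x ^ (m - 2) * (1 - x ^ (T - m + 1))) := by
        congr 1; ext x; rw [← hpow]; ring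
    _ = _ := by
      rw [intervalIntegral.integral_const_mul, integral_pow_mul_one_sub_pow, hm1, hT]
      field_simp

theorem secretary_integral_identity_general (T k : ℕ) (hk : 1 ≤ k) :
    (∫ x in (0:ℝ)..1, (k : ℝ) * x ^ (k - 1) *
        ∑ m ∈ Finset.Icc (k + 1) T,
          x ^ (m - k - 1) * ((1 - x ^ (T - m + 1)) / ((T - m + 1 : ℕ) : ℝ))) =
    ((k : ℝ) / T) * ∑ m ∈ Finset.Icc (k + 1) T, 1 / ((m : ℝ) - 1) := by
  simp_rw [mul_sum]
  rw [intervalIntegral.integral_finsetSum fun m _ =>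
    Continuous.intervalIntegrable (by fun_prop) _ _]
  exact sum_congr rfl fun m hm => integral_secretary_summand hk hm

/-- The integral identity reducing the secretary-problem win probability
(values i.i.d. uniform on [0,1], cutoff-`k` strategy) to the classical formula. -/
theorem secretary_integral_identity (T k : ℕ) (hT : 1 ≤ T) (hk : 1 ≤ k) (hkT : k < T) :
    (∫ x in (0:ℝ)..1, (k : ℝ) * x ^ (k - 1) *
        ∑ m ∈ Finset.Icc (k + 1) T,
          x ^ (m - k - 1) * ((1 - x ^ (T - m + 1)) / ((T - m + 1 : ℕ) : ℝ))) =
    ((k : ℝ) / T) * ∑ m ∈ Finset.Icc (k + 1) T, 1 / ((m : ℝ) - 1) :=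
  secretary_integral_identity_general T k hk
end

section
/- For each integer t ≥ 2, the equation z^{t-1} = \sum_{j=1}^{t-1} (z^{j-1} - z^{t-1})/(t-j) has a unique solution z_t in the open interval (0,1). -/
open Finset

/-!
Dividing the equation by `z^{t-1}` and substituting `i = t - j` turns it into `f(z) = 1` with
`f(z) = ∑_{i=1}^{t-1} (z^{-i} - 1)/i = criticalSum (t - 1) z`. On `(0, ∞)` every summand is strictly
decreasing, so `f` is injective there; and `f(1) = 0 < 1 ≤ f(1/2)` (already the summand `i = 1` is
`1` at `z = 1/2`), so the intermediate value theorem yields a root in `[1/2, 1)`.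
-/

noncomputable def criticalSum (n : ℕ) (z : ℝ) : ℝ :=
  ∑ i ∈ Icc 1 n, ((z ^ i)⁻¹ - 1) / i

lemma sum_Icc_div_eq_pow_mul_criticalSum (t : ℕ) {z : ℝ} (hz : z ≠ 0) :
    ∑ j ∈ Icc 1 (t - 1), (z ^ (j - 1) - z ^ (t - 1)) / ((t - j : ℕ) : ℝ)
      = z ^ (t - 1) * criticalSum (t - 1) z := by
  rw [criticalSum, mul_sum]
  refine sum_nbij' (fun j => t - j) (fun i => t - i) ?_ ?_ ?_ ?_ fun j hj => ?_
  iterate 4 (intro a ha; simp only [mem_Icc] at ha ⊢; omega)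
  have hsplit : z ^ (t - 1) = z ^ (j - 1) * z ^ (t - j) := by
    rw [← pow_add]; congr 1; simp only [mem_Icc] at hj; omega
  rw [hsplit, mul_div_assoc', mul_sub, mul_one, mul_assoc,
    mul_inv_cancel₀ (pow_ne_zero _ hz), mul_one]

lemma criticalSum_one (n : ℕ) : criticalSum n 1 = 0 := by
  simp [criticalSum]

lemma criticalSum_strictAntiOn {n : ℕ} (hn : 1 ≤ n) :
    StrictAntiOn (criticalSum n) (Set.Ioi 0) := by
  intro x hx y _ hxy
  refine sum_lt_sum_of_nonempty (nonempty_Icc.2 hn) fun i hi => ?_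
  have hi : 1 ≤ i := (mem_Icc.1 hi).1
  have hpow : x ^ i < y ^ i := pow_lt_pow_left₀ hxy (le_of_lt hx) (by omega)
  exact div_lt_div_of_pos_right (sub_lt_sub_right (inv_strictAnti₀ (pow_pos hx i) hpow) 1)
    (Nat.cast_pos.2 hi)

lemma inv_sub_one_le_criticalSum {n : ℕ} (hn : 1 ≤ n) {z : ℝ} (hz₀ : 0 < z) (hz₁ : z ≤ 1) :
    z⁻¹ - 1 ≤ criticalSum n z := by
  have hterm : ∀ i ∈ Icc 1 n, 0 ≤ ((z ^ i)⁻¹ - 1) / (i : ℝ) := fun i _ =>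
    div_nonneg (sub_nonneg.2 (one_le_inv₀ (pow_pos hz₀ i) |>.2 (pow_le_one₀ hz₀.le hz₁)))
      i.cast_nonneg
  refine le_of_eq_of_le ?_ (single_le_sum hterm (mem_Icc.2 ⟨le_rfl, hn⟩))
  simp

lemma continuousOn_criticalSum (n : ℕ) : ContinuousOn (criticalSum n) (Set.Ioi 0) :=
  continuousOn_finsetSum _ fun i _ =>
    ((continuousOn_pow i).inv₀ fun _ hz => pow_ne_zero _ (ne_of_gt hz)).sub
      continuousOn_const |>.div_const _

lemma existsUnique_criticalSum_eq_one {n : ℕ} (hn : 1 ≤ n) :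
    ∃! z : ℝ, z ∈ Set.Ioo 0 1 ∧ criticalSum n z = 1 := by
  have hcont : ContinuousOn (criticalSum n) (Set.Icc (1 / 2) 1) :=
    (continuousOn_criticalSum n).mono fun _ hz => lt_of_lt_of_le (by norm_num) hz.1
  have hone : (1 : ℝ) ∈ Set.Icc (criticalSum n 1) (criticalSum n (1 / 2)) := by
    refine ⟨by rw [criticalSum_one]; norm_num, ?_⟩
    have h := inv_sub_one_le_criticalSum hn (z := 1 / 2) (by norm_num) (by norm_num)
    norm_num at h
    exact h
  obtain ⟨z, ⟨hz₀, hz₁⟩, hz⟩ := intermediate_value_Icc' (by norm_num) hcont hone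
  have hz_ne_one : z ≠ 1 := by rintro rfl; simp [criticalSum_one] at hz
  refine ⟨z, ⟨⟨by linarith, lt_of_le_of_ne hz₁ hz_ne_one⟩, hz⟩, fun w ⟨hw, hw_eq⟩ => ?_⟩
  exact (criticalSum_strictAntiOn hn).injOn hw.1 (show 0 < z by linarith) (hw_eq.trans hz.symm)

/-- For each `t ≥ 2` the critical-value equation
`z^{t-1} = ∑_{j=1}^{t-1} (z^{j-1} - z^{t-1})/(t-j)` has a unique solution in `(0,1)`. -/
theorem critical_value_exists_unique (t : ℕ) (ht : 2 ≤ t) :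
    ∃! z : ℝ, z ∈ Set.Ioo (0:ℝ) 1 ∧
      z ^ (t - 1) =
        ∑ j ∈ Finset.Icc 1 (t - 1), (z ^ (j - 1) - z ^ (t - 1)) / ((t - j : ℕ) : ℝ) := by
  refine (existsUnique_congr fun z => and_congr_right fun hz => ?_).2
    (existsUnique_criticalSum_eq_one (n := t - 1) (by omega))
  rw [sum_Icc_div_eq_pow_mul_criticalSum t hz.1.ne', left_eq_mul₀ (pow_ne_zero _ hz.1.ne')]
end

section
/- For the classical secretary problem win probability W(k,T) = (k/T) \sum_{m=k+1}^{T} 1/(m-1): for every T ≥ 2, max over k of W(k,T) is non-increasing in T, i.e., max_{1≤k<T+1} W(k,T+1) ≤ max_{1≤k<T} W(k,T). -/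
open Finset

/-- Win probability of the cutoff-`k` strategy in the classical secretary problem with
`T` candidates. -/
noncomputable def secretaryW (k T : ℕ) : ℝ :=
  ((k : ℝ) / T) * ∑ m ∈ Finset.Icc (k + 1) T, 1 / ((m : ℝ) - 1)

lemma secW_nonneg (k T : ℕ) (hk : 1 ≤ k) : 0 ≤ secretaryW k T := by
  apply mul_nonneg (by positivity)
  apply Finset.sum_nonneg
  intro m hm
  have : k + 1 ≤ m := (Finset.mem_Icc.mp hm).1
  have : (1:ℝ) ≤ (m:ℝ) - 1 := by
    have : 2 ≤ m := by omega
    have : (2:ℝ) ≤ (m:ℝ) := by exact_mod_cast this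
    linarith
  positivity

lemma sum_split_top (k T : ℕ) (h : k ≤ T) :
    ∑ m ∈ Finset.Icc (k+1) (T+1), 1 / ((m : ℝ) - 1)
      = (∑ m ∈ Finset.Icc (k+1) T, 1 / ((m : ℝ) - 1)) + 1 / T := by
  rw [Finset.sum_Icc_succ_top (by omega : k + 1 ≤ T + 1)]
  push_cast
  norm_num

lemma sum_split_bot (k T : ℕ) (hk : 1 ≤ k) (h : k ≤ T) :
    ∑ m ∈ Finset.Icc k T, 1 / ((m : ℝ) - 1)
      = 1 / ((k : ℝ) - 1) + ∑ m ∈ Finset.Icc (k+1) T, 1 / ((m : ℝ) - 1) := by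
  rw [Finset.Icc_eq_cons_Ioc h, Finset.sum_cons, ← Finset.Icc_add_one_left_eq_Ioc]

/-- Key convexity identity: for `2 ≤ k ≤ T`,
`W(k,T+1) = (1 - k/(T+1)) W(k,T) + (k/(T+1)) W(k-1,T)`. -/
lemma secW_identity (k T : ℕ) (hk : 2 ≤ k) (hkT : k ≤ T) :
    secretaryW k (T + 1)
      = (1 - (k : ℝ) / (T + 1)) * secretaryW k T
        + ((k : ℝ) / (T + 1)) * secretaryW (k - 1) T := by
  have hT : (1:ℝ) ≤ (T:ℝ) := by exact_mod_cast (by omega : 1 ≤ T)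
  have hk1 : ((k - 1 : ℕ) : ℝ) = (k : ℝ) - 1 := by
    have : 1 ≤ k := by omega
    push_cast [this]; ring
  have hidx : (k - 1) + 1 = k := by omega
  unfold secretaryW
  rw [hidx, sum_split_top k T hkT, sum_split_bot k T (by omega) hkT, hk1]
  have hkR : (2:ℝ) ≤ (k:ℝ) := by exact_mod_cast hk
  set A : ℝ := ∑ m ∈ Finset.Icc (k+1) T, 1 / ((m : ℝ) - 1) with hA
  push_cast
  have h1 : (T:ℝ) ≠ 0 := by linarith
  have h2 : (T:ℝ) + 1 ≠ 0 := by linarith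
  have h3 : (k:ℝ) - 1 ≠ 0 := by linarith
  field_simp
  ring

/-- Monotonicity at `k = 1`: `W(1,T+1) ≤ W(1,T)` for `T ≥ 2`. -/
lemma secW_one (T : ℕ) (hT : 2 ≤ T) : secretaryW 1 (T + 1) ≤ secretaryW 1 T := by
  have hT1 : (2:ℝ) ≤ (T:ℝ) := by exact_mod_cast hT
  unfold secretaryW
  rw [sum_split_top 1 T (by omega)]
  set A : ℝ := ∑ m ∈ Finset.Icc 2 T, 1 / ((m : ℝ) - 1) with hA
  have hA1 : (1:ℝ) ≤ A := by
    have := Finset.single_le_sum (f := fun m : ℕ => 1 / ((m : ℝ) - 1))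
      (fun m hm => by
        have h2m : 2 ≤ m := (Finset.mem_Icc.mp hm).1
        have h2m' : (2:ℝ) ≤ (m:ℝ) := by exact_mod_cast h2m
        have : (1:ℝ) ≤ (m:ℝ) - 1 := by linarith
        positivity)
      (Finset.mem_Icc.mpr ⟨le_refl 2, hT⟩)
    norm_num at this
    rw [hA]
    simpa [one_div] using this
  push_cast
  rw [div_mul_eq_mul_div, div_mul_eq_mul_div, div_le_div_iff₀ (by linarith) (by linarith)]
  have h1 : (T:ℝ) ≠ 0 := by linarith
  have key : 1 * (A + 1 / T) * T = A * T + 1 := by field_simp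
  rw [key]
  nlinarith

/-- The optimal classical secretary win probability `V(T) = max_{1 ≤ k < T} W(k,T)` is
non-increasing in `T`: `V(T+1) ≤ V(T)` for all `T ≥ 2`. -/
theorem secretary_value_antitone (T : ℕ) (hT : 2 ≤ T) :
    (Finset.Icc 1 T).sup' (Finset.nonempty_Icc.mpr (by omega)) (fun k => secretaryW k (T + 1)) ≤
      (Finset.Icc 1 (T - 1)).sup' (Finset.nonempty_Icc.mpr (by omega)) (fun k => secretaryW k T) := by
  set V : ℝ := (Finset.Icc 1 (T - 1)).sup' (Finset.nonempty_Icc.mpr (by omega))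
      (fun k => secretaryW k T) with hV
  have hle : ∀ j, 1 ≤ j → j ≤ T - 1 → secretaryW j T ≤ V := by
    intro j h1 h2
    rw [hV]
    exact Finset.le_sup' (fun k => secretaryW k T) (Finset.mem_Icc.mpr ⟨h1, h2⟩)
  have hV0 : 0 ≤ V := le_trans (secW_nonneg 1 T le_rfl) (hle 1 le_rfl (by omega))
  apply Finset.sup'_le
  intro k hk
  obtain ⟨hk1, hk2⟩ := Finset.mem_Icc.mp hk
  rcases eq_or_lt_of_le hk1 with h1 | h1
  · -- k = 1
    subst h1
    exact le_trans (secW_one T hT) (hle 1 le_rfl (by omega))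
  · -- 2 ≤ k
    have hk2' : 2 ≤ k := h1
    rw [secW_identity k T hk2' hk2]
    have hWk : secretaryW k T ≤ V := by
      rcases eq_or_lt_of_le hk2 with h | h
      · -- k = T : W(T,T) = 0
        subst h
        have : secretaryW k k = 0 := by
          unfold secretaryW
          rw [Finset.Icc_eq_empty (by omega)]
          simp
        rw [this]; exact hV0
      · exact hle k (by omega) (by omega)
    have hWk1 : secretaryW (k - 1) T ≤ V := hle (k - 1) (by omega) (by omega)
    have ha0 : (0:ℝ) ≤ (k : ℝ) / (T + 1) := by positivity
    have ha1 : (k : ℝ) / (T + 1) ≤ 1 := by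
      rw [div_le_one (by positivity)]
      have : (k:ℝ) ≤ (T:ℝ) := by exact_mod_cast hk2
      linarith
    nlinarith
end
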